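/- Let X be a nonempty closed subset of [0,∞) with the induced metric. Then every metric d on the double of X is quasi-isometric to its adjoint d*, and every selfadjoint metric on the double of X is idempotent (d ∘ d quasi-isometric to d). Consequently, every element of M(X) is a selfadjoint idempotent and M(X) is commutative. -/

import Mathlib

/-!
For any metric `d` on the double and any base point `m`, the triangle inequalities give
`|dist x m - dist y m| ≤ d(x, y') + d(m, m')`. Taking for `m` the least element of `X`, the left
side is `dist x y`, so `dist ≤ d + c` for a constant `c`. Under this coarse domination `d(x, z')`
is comparable to `d(z, x')`, and the composite `(ρ ∘ d)(x, z')` is comparable to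
`d(x, z') + ρ(z, z')` (take `y = z` in the infimum for one direction), which in turn is comparable
to `ρ(x, z') + d(z, z')`, the corresponding expression for `d ∘ ρ`.
-/

open Metric

/-- A cross-metric between metric spaces `X` and `Y`: the cross-distance part
`k x y = d(x, y)` of a metric on `X ⊔ Y` extending the given metrics, with the
distance between the two pieces bounded below away from zero. -/
structure CrossMetric (X Y : Type*) [MetricSpace X] [MetricSpace Y] where
  k : X → Y → ℝ
  sep : ∃ ε > 0, ∀ x y, ε ≤ k x y
  tri_left : ∀ x x' y, k x y ≤ dist x x' + k x' y
  tri_right : ∀ x y y', k x y ≤ k x y' + dist y' y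
  cross_left : ∀ x x' y, dist x x' ≤ k x y + k x' y
  cross_right : ∀ x y y', dist y y' ≤ k x y + k x y'

/-- Composition of cross-metrics: `(ρ ∘ d)(x,z) = inf_y [d(x,y) + ρ(y,z)]`. -/
noncomputable def compFun {X Y Z : Type*} (ρ : Y → Z → ℝ) (d : X → Y → ℝ) : X → Z → ℝ :=
  fun x z => ⨅ y, (d x y + ρ y z)

/-- The adjoint cross-metric: `d*(y,x) = d(x,y)`. -/
def adjFun {X Y : Type*} (d : X → Y → ℝ) : Y → X → ℝ := fun y x => d x y

/-- Quasi-isometry of two cross-distance functions. -/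
def QI {X Y : Type*} (d1 d2 : X → Y → ℝ) : Prop :=
  ∃ α > 0, ∃ β ≥ (1:ℝ), ∀ x y,
    -α + (1/β) * d1 x y ≤ d2 x y ∧ d2 x y ≤ α + β * d1 x y

lemma qi_of_le_of_le {X Y : Type*} {d₁ d₂ : X → Y → ℝ} {a₁ a₂ b : ℝ} (hb : 1 ≤ b)
    (h₁₂ : ∀ x y, d₂ x y ≤ a₁ + b * d₁ x y) (h₂₁ : ∀ x y, d₁ x y ≤ a₂ + b * d₂ x y) :
    QI d₁ d₂ := by
  refine ⟨|a₁| + |a₂| + 1, by positivity, b, hb, fun x y => ⟨?_, ?_⟩⟩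
  · have : 1 / b * d₁ x y ≤ |a₂| + d₂ x y := by
      rw [one_div_mul_eq_div, div_le_iff₀ (by linarith)]
      nlinarith [h₂₁ x y, le_abs_self a₂, abs_nonneg a₂]
    linarith [abs_nonneg a₁]
  · linarith [h₁₂ x y, le_abs_self a₁, abs_nonneg a₂]

lemma IsLeast.dist_eq_abs_dist_sub_dist {S : Set ℝ} {m : ℝ} (hm : IsLeast S m) (x y : S) :
    dist x y = |dist x ⟨m, hm.1⟩ - dist y ⟨m, hm.1⟩| := by
  simp only [Subtype.dist_eq, Real.dist_eq, abs_of_nonneg (sub_nonneg.2 (hm.2 x.2)),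
    abs_of_nonneg (sub_nonneg.2 (hm.2 y.2)), sub_sub_sub_cancel_right]

namespace CrossMetric

lemma k_pos {X Y : Type*} [MetricSpace X] [MetricSpace Y] (d : CrossMetric X Y) (x : X) (y : Y) :
    0 < d.k x y := by
  obtain ⟨ε, hε, h⟩ := d.sep
  exact hε.trans_le (h x y)

lemma compFun_le {X Y Z : Type*} [MetricSpace X] [MetricSpace Y] [MetricSpace Z]
    (d : CrossMetric X Y) (ρ : CrossMetric Y Z) (x : X) (y : Y) (z : Z) :
    compFun ρ.k d.k x z ≤ d.k x y + ρ.k y z :=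
  ciInf_le ⟨0, by rintro _ ⟨y, rfl⟩; exact (add_pos (d.k_pos x y) (ρ.k_pos y z)).le⟩ y

variable {X : Type*} [MetricSpace X] (d ρ : CrossMetric X X)

lemma abs_dist_sub_dist_le (m x y : X) : |dist x m - dist y m| ≤ d.k x y + d.k m m := by
  rw [abs_sub_le_iff]
  constructor
  · linarith [d.cross_left x m m, d.tri_right x m y]
  · linarith [d.cross_right x y m, d.tri_left x m m]

variable {d ρ} {c c' : ℝ}

lemma k_swap_le (hd : ∀ x y, dist x y ≤ d.k x y + c) (x y : X) :
    d.k y x ≤ 2 * c + 3 * d.k x y := by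
  linarith [d.tri_right y x y, d.tri_left y x y, hd x y, dist_comm x y]

lemma k_add_k_le (hρ : ∀ x y, dist x y ≤ ρ.k x y + c) (x z : X) :
    d.k x z + ρ.k z z ≤ 3 * (ρ.k x z + d.k z z) + 2 * c := by
  linarith [d.tri_left x z z, hρ x z, ρ.tri_left z x z, dist_comm x z, d.k_pos z z]

lemma add_le_three_mul_compFun [Nonempty X] (hρ : ∀ x y, dist x y ≤ ρ.k x y + c) (x z : X) :
    d.k x z + ρ.k z z ≤ 3 * compFun ρ.k d.k x z + 2 * c := by
  suffices (d.k x z + ρ.k z z - 2 * c) / 3 ≤ compFun ρ.k d.k x z by linarith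
  refine le_ciInf fun y => ?_
  linarith [d.tri_right x z y, hρ y z, ρ.tri_left z y z, d.cross_right x z y, dist_comm y z]

theorem qi_adjFun (hd : ∀ x y, dist x y ≤ d.k x y + c) : QI (adjFun d.k) d.k :=
  qi_of_le_of_le (b := 3) (by norm_num) (fun x y => k_swap_le hd y x) (fun x y => k_swap_le hd x y)

theorem qi_compFun_self [Nonempty X] (hd : ∀ x y, dist x y ≤ d.k x y + c) :
    QI (compFun d.k d.k) d.k := by
  refine qi_of_le_of_le (a₁ := 2 * c) (a₂ := c) (b := 3) (by norm_num) (fun x z => ?_)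
    (fun x z => ?_)
  · linarith [add_le_three_mul_compFun (d := d) hd x z, d.k_pos z z]
  · linarith [compFun_le d d x z z, d.tri_left z x z, hd x z, dist_comm x z]

lemma compFun_le_nine_mul_compFun [Nonempty X] (hd : ∀ x y, dist x y ≤ d.k x y + c)
    (hρ : ∀ x y, dist x y ≤ ρ.k x y + c') (x z : X) :
    compFun ρ.k d.k x z ≤ 6 * c + 2 * c' + 9 * compFun d.k ρ.k x z := by
  linarith [compFun_le d ρ x z z, k_add_k_le (d := d) hρ x z,
    add_le_three_mul_compFun (d := ρ) hd x z]

theorem qi_compFun_comm [Nonempty X] (hd : ∀ x y, dist x y ≤ d.k x y + c)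
    (hρ : ∀ x y, dist x y ≤ ρ.k x y + c') : QI (compFun d.k ρ.k) (compFun ρ.k d.k) :=
  qi_of_le_of_le (by norm_num) (compFun_le_nine_mul_compFun hd hρ)
    (compFun_le_nine_mul_compFun hρ hd)

end CrossMetric

/-- for a nonempty closed subset `X ⊆ [0,∞)` of the half-line with the
induced metric, every metric on the double of `X` is quasi-isometric to its adjoint,
every selfadjoint metric on the double is idempotent, and `M(X)` is commutative. -/
theorem statement17 (S : Set ℝ) (hS : S ⊆ Set.Ici (0:ℝ)) (hSc : IsClosed S)
    (hne : S.Nonempty) :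
    (∀ d : CrossMetric S S, QI (adjFun d.k) d.k) ∧
    (∀ d : CrossMetric S S, (∀ x y, d.k x y = d.k y x) → QI (compFun d.k d.k) d.k) ∧
    (∀ d ρ : CrossMetric S S, QI (compFun d.k ρ.k) (compFun ρ.k d.k)) := by
  have : Nonempty S := hne.to_subtype
  have hleast := hSc.isLeast_csInf hne ⟨0, hS⟩
  have hdom (d : CrossMetric S S) (x y : S) :
      dist x y ≤ d.k x y + d.k ⟨_, hleast.1⟩ ⟨_, hleast.1⟩ :=
    (hleast.dist_eq_abs_dist_sub_dist x y).trans_le (d.abs_dist_sub_dist_le _ x y)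
  exact ⟨fun d => CrossMetric.qi_adjFun (hdom d), fun d _ => CrossMetric.qi_compFun_self (hdom d),
    fun d ρ => CrossMetric.qi_compFun_comm (hdom d) (hdom ρ)⟩
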